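/- arXiv:2510.24044 — 3 statements merged into one kernel-verified Lean document; each statement's English description precedes it below -/
import Mathlib

section
/- For any hypothesis f : X → [0,1], target labeling function f_T, and source labeling function f_S, and for any distributions D_S, D_T on X: ε_{D_T}(f, f_T) ≤ ε_{D_S}(f, f_S) + |ε_{D_T}(f, f_S) − ε_{D_S}(f, f_S)| + ε_{D_T}(f_S, f_T). -/
open MeasureTheory

theorem target_error_decomposition {X : Type*} [MeasurableSpace X]
    (D_S D_T : Measure X) [IsProbabilityMeasure D_S] [IsProbabilityMeasure D_T]
    (f f_S f_T : X → ℝ)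
    (hf : Measurable f) (hfS : Measurable f_S) (hfT : Measurable f_T)
    (hf01 : ∀ x, f x ∈ Set.Icc (0:ℝ) 1) (hfS01 : ∀ x, f_S x ∈ Set.Icc (0:ℝ) 1)
    (hfT01 : ∀ x, f_T x ∈ Set.Icc (0:ℝ) 1)
    (hiT : Integrable f D_T) (hiST : Integrable f_S D_T) (hiTT : Integrable f_T D_T)
    (hiS : Integrable f D_S) (hiSS : Integrable f_S D_S) :
    ∫ x, |f x - f_T x| ∂D_T
      ≤ (∫ x, |f x - f_S x| ∂D_S)
        + |(∫ x, |f x - f_S x| ∂D_T) - ∫ x, |f x - f_S x| ∂D_S|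
        + ∫ x, |f_S x - f_T x| ∂D_T := by
  have h1 : Integrable (fun x => |f x - f_S x|) D_T := (hiT.sub hiST).abs
  have h2 : Integrable (fun x => |f_S x - f_T x|) D_T := (hiST.sub hiTT).abs
  have step1 : ∫ x, |f x - f_T x| ∂D_T
      ≤ (∫ x, |f x - f_S x| ∂D_T) + ∫ x, |f_S x - f_T x| ∂D_T := by
    rw [← integral_add h1 h2]
    refine integral_mono (hiT.sub hiTT).abs (h1.add h2) fun x => ?_
    calc |f x - f_T x| = |(f x - f_S x) + (f_S x - f_T x)| := by ring_nf
      _ ≤ |f x - f_S x| + |f_S x - f_T x| := abs_add_le _ _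
  have step2 : (∫ x, |f x - f_S x| ∂D_T)
      ≤ (∫ x, |f x - f_S x| ∂D_S)
        + |(∫ x, |f x - f_S x| ∂D_T) - ∫ x, |f x - f_S x| ∂D_S| := by
    have := abs_sub_abs_le_abs_sub (∫ x, |f x - f_S x| ∂D_T) (∫ x, |f x - f_S x| ∂D_S)
    have h := le_abs_self ((∫ x, |f x - f_S x| ∂D_T) - ∫ x, |f x - f_S x| ∂D_S)
    linarith
  linarith
end

section
/- Let H ⊆ [0,1]^X be a class of functions and let H̃ = {x ↦ sgn(|f(x) − f'(x)| − t) : f, f' ∈ H, 0 ≤ t ≤ 1}, where sgn(s) = 1 if s > 0 and 0 otherwise. Then for any two probability distributions D, D' over X and any f, f' ∈ H: |ε_D(f, f') − ε_{D'}(f, f')| ≤ d_{H̃}(D, D'), where d_{H̃}(D, D') = sup_{g ∈ H̃} |P_D[g(x)=1] − P_{D'}[g(x)=1]|. -/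
open MeasureTheory

theorem discrepancy_bounded_by_Htilde_divergence {X : Type*} [MeasurableSpace X]
    (D D' : Measure X) [IsProbabilityMeasure D] [IsProbabilityMeasure D']
    (H : Set (X → ℝ))
    (hH : ∀ f ∈ H, Measurable f ∧ ∀ x, f x ∈ Set.Icc (0:ℝ) 1)
    (f f' : X → ℝ) (hf : f ∈ H) (hf' : f' ∈ H) :
    |(∫ x, |f x - f' x| ∂D) - ∫ x, |f x - f' x| ∂D'|
      ≤ sSup {r : ℝ | ∃ u ∈ H, ∃ v ∈ H, ∃ t ∈ Set.Icc (0:ℝ) 1,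
          r = |(D {x | 0 < |u x - v x| - t}).toReal
                - (D' {x | 0 < |u x - v x| - t}).toReal|} := by
  obtain ⟨hfm, hfb⟩ := hH f hf
  obtain ⟨hfm', hfb'⟩ := hH f' hf'
  set g : X → ℝ := fun x => |f x - f' x| with hgdef
  have hgm : Measurable g := (hfm.sub hfm').abs
  have hg0 : ∀ x, 0 ≤ g x := fun x => abs_nonneg _
  have hg1 : ∀ x, g x ≤ 1 := by
    intro x
    have h1 := hfb x; have h2 := hfb' x
    rw [hgdef]; simp only []
    rw [abs_sub_le_iff]
    constructor <;> [linarith [h1.2, h2.1]; linarith [h2.2, h1.1]]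
  have hint : ∀ (μ : Measure X) [IsProbabilityMeasure μ], Integrable g μ := by
    intro μ _
    refine ⟨hgm.aestronglyMeasurable, ?_⟩
    apply MeasureTheory.HasFiniteIntegral.of_bounded (C := 1)
    exact Filter.Eventually.of_forall fun x => by
      rw [Real.norm_eq_abs, abs_of_nonneg (hg0 x)]; exact hg1 x
  have key : ∀ (μ : Measure X) [IsProbabilityMeasure μ],
      ∫ x, g x ∂μ = ∫ t in Set.Ioc (0:ℝ) 1, (μ {x | t < g x}).toReal := by
    intro μ _
    rw [(hint μ).integral_eq_integral_meas_lt (Filter.Eventually.of_forall hg0)]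
    rw [setIntegral_eq_of_subset_of_ae_diff_eq_zero
        nullMeasurableSet_Ioi (Set.Ioc_subset_Ioi_self : Set.Ioc (0:ℝ) 1 ⊆ Set.Ioi 0) ?_]
    · rfl
    apply Filter.Eventually.of_forall fun t ht => ?_
    have ht1 : 1 < t := by
      simp only [Set.mem_diff, Set.mem_Ioi, Set.mem_Ioc, not_and, not_le] at ht
      exact ht.2 ht.1
    have : {x | t < g x} = ∅ := by
      ext x; simp only [Set.mem_setOf_eq, Set.mem_empty_iff_false, iff_false, not_lt]
      exact (hg1 x).trans ht1.le
    rw [this]; simp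
  -- the divergence set
  set Sset : Set ℝ := {r : ℝ | ∃ u ∈ H, ∃ v ∈ H, ∃ t ∈ Set.Icc (0:ℝ) 1,
          r = |(D {x | 0 < |u x - v x| - t}).toReal
                - (D' {x | 0 < |u x - v x| - t}).toReal|} with hSset
  have hbdd : BddAbove Sset := by
    refine ⟨1, fun r hr => ?_⟩
    obtain ⟨u, _, v, _, t, _, hr⟩ := hr
    have h1 : (D {x | 0 < |u x - v x| - t}).toReal ≤ 1 := by
      have := prob_le_one (μ := D) (s := {x | 0 < |u x - v x| - t})
      simpa using ENNReal.toReal_mono (by simp) this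
    have h2 : (D' {x | 0 < |u x - v x| - t}).toReal ≤ 1 := by
      have := prob_le_one (μ := D') (s := {x | 0 < |u x - v x| - t})
      simpa using ENNReal.toReal_mono (by simp) this
    have h3 : (0:ℝ) ≤ (D {x | 0 < |u x - v x| - t}).toReal := ENNReal.toReal_nonneg
    have h4 : (0:ℝ) ≤ (D' {x | 0 < |u x - v x| - t}).toReal := ENNReal.toReal_nonneg
    rw [hr, abs_sub_le_iff]; constructor <;> linarith
  have hmem : ∀ t ∈ Set.Icc (0:ℝ) 1,
      |(D {x | t < g x}).toReal - (D' {x | t < g x}).toReal| ≤ sSup Sset := by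
    intro t ht
    apply le_csSup hbdd
    refine ⟨f, hf, f', hf', t, ht, ?_⟩
    have : {x | 0 < |f x - f' x| - t} = {x | t < g x} := by
      ext x; simp only [Set.mem_setOf_eq, sub_pos, hgdef]
    rw [this]
  -- antitone / integrable tail functions
  have hanti : ∀ (μ : Measure X) [IsProbabilityMeasure μ],
      Antitone (fun t : ℝ => (μ {x | t < g x}).toReal) := by
    intro μ _ s t hst
    exact ENNReal.toReal_mono (measure_ne_top μ _)
      (measure_mono fun x hx => lt_of_le_of_lt hst hx)
  have hInt : ∀ (μ : Measure X) [IsProbabilityMeasure μ],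
      IntegrableOn (fun t : ℝ => (μ {x | t < g x}).toReal) (Set.Ioc (0:ℝ) 1) := by
    intro μ _
    refine ⟨((hanti μ).measurable).aestronglyMeasurable, ?_⟩
    apply MeasureTheory.HasFiniteIntegral.of_bounded (C := 1)
    apply Filter.Eventually.of_forall fun t => ?_
    rw [Real.norm_eq_abs, abs_of_nonneg ENNReal.toReal_nonneg]
    have := prob_le_one (μ := μ) (s := {x | t < g x})
    simpa using ENNReal.toReal_mono (by simp) this
  rw [key D, key D', ← integral_sub (hInt D) (hInt D')]
  have hbound := norm_setIntegral_le_of_norm_le_const (μ := volume)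
    (s := Set.Ioc (0:ℝ) 1) (C := sSup Sset)
    (f := fun t => (D {x | t < g x}).toReal - (D' {x | t < g x}).toReal)
    (by simp) (fun t ht => by
      rw [Real.norm_eq_abs]
      exact hmem t ⟨ht.1.le, ht.2⟩)
  rw [Real.norm_eq_abs] at hbound
  calc |∫ t in Set.Ioc (0:ℝ) 1,
        ((D {x | t < g x}).toReal - (D' {x | t < g x}).toReal)|
      ≤ sSup Sset * (volume (Set.Ioc (0:ℝ) 1)).toReal := hbound
    _ = sSup Sset := by simp
end

section
/- Let f_S = λ·c + (1−λ)·a and f_T = λ·c + (1−λ)·b, where c, a, b : X → [0,1] and λ ∈ [0,1]. For any hypothesis f : X → [0,1] and distributions D_S, D_T on X, if |ε_{D_T}(f, f_S) − ε_{D_S}(f, f_S)| ≤ d, then ε_{D_T}(f, f_T) ≤ ε_{D_S}(f, f_S) + d + (1−λ)·E_{D_T}[|a(x) − b(x)|]. -/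
open MeasureTheory

theorem target_error_bound_with_env_term {X : Type*} [MeasurableSpace X]
    (D_S D_T : Measure X) [IsProbabilityMeasure D_S] [IsProbabilityMeasure D_T]
    (c a b f : X → ℝ) (lam d : ℝ) (hlam : lam ∈ Set.Icc (0:ℝ) 1)
    (hc : Measurable c) (ha : Measurable a) (hb : Measurable b) (hf : Measurable f)
    (hc01 : ∀ x, c x ∈ Set.Icc (0:ℝ) 1) (ha01 : ∀ x, a x ∈ Set.Icc (0:ℝ) 1)
    (hb01 : ∀ x, b x ∈ Set.Icc (0:ℝ) 1) (hf01 : ∀ x, f x ∈ Set.Icc (0:ℝ) 1)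
    (hicS : Integrable c D_S) (hiaS : Integrable a D_S) (hifS : Integrable f D_S)
    (hicT : Integrable c D_T) (hiaT : Integrable a D_T) (hibT : Integrable b D_T)
    (hifT : Integrable f D_T)
    (hd : |(∫ x, |f x - (lam * c x + (1 - lam) * a x)| ∂D_T)
            - ∫ x, |f x - (lam * c x + (1 - lam) * a x)| ∂D_S| ≤ d) :
    ∫ x, |f x - (lam * c x + (1 - lam) * b x)| ∂D_T
      ≤ (∫ x, |f x - (lam * c x + (1 - lam) * a x)| ∂D_S) + d
        + (1 - lam) * ∫ x, |a x - b x| ∂D_T := by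
  have hi1 : Integrable (fun x => |f x - (lam * c x + (1 - lam) * b x)|) D_T := by
    apply Integrable.abs
    exact hifT.sub ((hicT.const_mul lam).add (hibT.const_mul (1 - lam)))
  have hi2 : Integrable (fun x => |f x - (lam * c x + (1 - lam) * a x)|) D_T := by
    apply Integrable.abs
    exact hifT.sub ((hicT.const_mul lam).add (hiaT.const_mul (1 - lam)))
  have hi3 : Integrable (fun x => |a x - b x|) D_T := (hiaT.sub hibT).abs
  have key : ∫ x, |f x - (lam * c x + (1 - lam) * b x)| ∂D_T
      ≤ (∫ x, |f x - (lam * c x + (1 - lam) * a x)| ∂D_T)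
        + (1 - lam) * ∫ x, |a x - b x| ∂D_T := by
    rw [← integral_const_mul, ← integral_add hi2 (hi3.const_mul _)]
    apply integral_mono hi1 (hi2.add (hi3.const_mul _))
    intro x
    have h1 : f x - (lam * c x + (1 - lam) * b x)
        = (f x - (lam * c x + (1 - lam) * a x)) + (1 - lam) * (a x - b x) := by ring
    simp only [Pi.add_apply]
    rw [h1]
    calc |(f x - (lam * c x + (1 - lam) * a x)) + (1 - lam) * (a x - b x)|
        ≤ |f x - (lam * c x + (1 - lam) * a x)| + |(1 - lam) * (a x - b x)| := abs_add_le _ _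
      _ = |f x - (lam * c x + (1 - lam) * a x)| + (1 - lam) * |a x - b x| := by
          have hnn : (0:ℝ) ≤ 1 - lam := by linarith [hlam.2]
          rw [abs_mul, abs_of_nonneg hnn]
  have h2 : (∫ x, |f x - (lam * c x + (1 - lam) * a x)| ∂D_T)
      ≤ (∫ x, |f x - (lam * c x + (1 - lam) * a x)| ∂D_S) + d := by
    have := abs_le.mp hd
    linarith [this.2]
  linarith
end
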